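/- arXiv:2210.12473 — 2 statements merged into one kernel-verified Lean document; each statement's English description precedes it below -/
import Mathlib

section
/- Let (M, {m_k}) be an A∞-module (right type A structure) over the torus algebra 𝒜 over ℤ/2, and fix n₁ ≥ 1. Let M̄ = ⊕_{j=1}^{n₁} M, write elements as (y : j), and define m̄_k((y : j), a₁, …, a_{k−1}) = (m_k(y, a₁, …, a_{k−1}) : [j + l]) where l is the number of indices i for which a_i ∈ {ρ₃, ρ₂₃, ρ₁₂₃} and [·] denotes the representative mod n₁ in {1,…,n₁}. Then (M̄, {m̄_k}) satisfies the A∞-structural equations: for all k, x ∈ M̄, a₁,…,a_{k−1} among basis elements of 𝒜, Σ_{j=1}^{k} m̄_{k−j+1}(m̄_j(x, a₁,…,a_{j−1}), a_j,…,a_{k−1}) + Σ_{j=1}^{k−2} m̄_{k−1}(x, a₁,…,a_{j−1}, a_j·a_{j+1}, a_{j+2},…,a_{k−1}) = 0. -/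
/-- Basis elements of the torus algebra 𝒜 over ℤ/2. -/
inductive TB : Type
  | i1 | i2 | r1 | r2 | r3 | r12 | r23 | r123
  deriving DecidableEq

instance : Fintype TB :=
  ⟨{.i1, .i2, .r1, .r2, .r3, .r12, .r23, .r123}, by intro x; cases x <;> decide⟩

/-- Multiplication table on basis elements; `none` means the product is zero.
Convention: `i₁ρ₂₃ = ρ₂₃ = ρ₂₃i₁`, the only nonzero products among the ρ's are
ρ₁ρ₂ = ρ₁₂, ρ₂ρ₃ = ρ₂₃, ρ₁ρ₂₃ = ρ₁₂₃, ρ₁₂ρ₃ = ρ₁₂₃. -/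
def bmul : TB → TB → Option TB
  | .i1, .i1 => some .i1
  | .i2, .i2 => some .i2
  | .i1, .r2 => some .r2
  | .r2, .i2 => some .r2
  | .i2, .r3 => some .r3
  | .r3, .i1 => some .r3
  | .i2, .r1 => some .r1
  | .r1, .i1 => some .r1
  | .i2, .r12 => some .r12
  | .r12, .i2 => some .r12
  | .i1, .r23 => some .r23
  | .r23, .i1 => some .r23
  | .i2, .r123 => some .r123
  | .r123, .i1 => some .r123
  | .r1, .r2 => some .r12
  | .r2, .r3 => some .r23
  | .r1, .r23 => some .r123
  | .r12, .r3 => some .r123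
  | _, _ => none

/-- The torus algebra as the ℤ/2-vector space of functions on the basis. -/
abbrev TorusAlg : Type := TB → ZMod 2

/-- The basis vector (delta function) corresponding to a basis element. -/
def bas (a : TB) : TorusAlg := fun b => if b = a then 1 else 0

/-- Multiplication of the torus algebra, extended bilinearly from the table. -/
def amul (f g : TorusAlg) : TorusAlg := fun c =>
  ∑ a : TB, ∑ b : TB, (if bmul a b = some c then f a * g b else 0)

/-- The unit 1 = i₁ + i₂ of the torus algebra. -/
def aone : TorusAlg := bas .i1 + bas .i2

/-- Shift count: `l(a) = 1` for a ∈ {ρ₃, ρ₂₃, ρ₁₂₃}, `l(a) = 0` otherwise. -/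
def lB : TB → ℕ
  | .r3 => 1
  | .r23 => 1
  | .r123 => 1
  | _ => 0

/-- Total shift count of a list of algebra inputs. -/
def lL (as : List TB) : ℕ := (as.map lB).sum

/-- Merge the entries at positions i, i+1 of the list using the algebra product;
`none` if the product is zero (or the positions do not exist). -/
def splitPair (as : List TB) (i : ℕ) : Option (List TB) :=
  match as.drop i with
  | a :: b :: rest => (bmul a b).map (fun c => as.take i ++ c :: rest)
  | _ => none

/-- The A∞ (right type A) structural equations, at the level of basis inputs from 𝒜:
Σⱼ m_{k−j+1}(m_j(x,a₁,…,a_{j−1}),a_j,…,a_{k−1})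
  + Σⱼ m_{k−1}(x,a₁,…,a_j·a_{j+1},…,a_{k−1}) = 0 (over ℤ/2). -/
def ainfRel {M : Type*} [AddCommMonoid M] (m : M → List TB → M) : Prop :=
  ∀ (x : M) (as : List TB),
    (∑ j ∈ Finset.range (as.length + 1), m (m x (as.take j)) (as.drop j)) +
      (∑ i ∈ Finset.range as.length, (splitPair as i).elim 0 (fun as' => m x as')) = 0

/-- The shifted ("orbifold") operations m̄ on M̄ = ⊕_{j ∈ ℤ/n} M:
m̄((y:j), a₁,…,a_{k−1}) = (m(y,a₁,…,a_{k−1}) : j + l), where l counts the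
arguments lying in {ρ₃, ρ₂₃, ρ₁₂₃}. -/
def mbar {M : Type*} (n : ℕ) (m : M → List TB → M) (v : ZMod n → M) (as : List TB) :
    ZMod n → M :=
  fun i => m (v (i - (lL as : ZMod n))) as

/-- Type D structure equation for coefficients d : coefficient of ρ_a ⊗ x_k in δ₁(x_j):
(μ ⊗ id) ∘ (id ⊗ δ₁) ∘ δ₁ = 0. -/
def dRel {V : Type*} [Fintype V] (d : V → TB → V → ZMod 2) : Prop :=
  ∀ (j k : V) (c : TB),
    (∑ m : V, ∑ a : TB, ∑ b : TB,
      (if bmul a b = some c then d j a m * d m b k else 0)) = 0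

/-- Coefficients of the type D structure D_n: δ₁(x_j) = ρ₂₃ ⊗ x_{j+1}. -/
def dD (n : ℕ) : ZMod n → TB → ZMod n → ZMod 2 :=
  fun j a k => if a = TB.r23 ∧ k = j + 1 then 1 else 0

/-- Coefficients of the iterated maps δ_k of a type D structure:
`itD d k j as k'` is the coefficient of (ρ_{as} ⊗ x_{k'}) in δ_k(x_j),
for `as` a list of length k. -/
def itD {V : Type*} [Fintype V] [DecidableEq V] (d : V → TB → V → ZMod 2) :
    ℕ → V → List TB → V → ZMod 2
  | 0, j, as, k => if as = [] ∧ j = k then 1 else 0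
  | _ + 1, _, [], _ => 0
  | k + 1, j, a :: rest, k' => ∑ mm : V, d j a mm * itD d k mm rest k'

/-- The box tensor differential of M ⊠ D_n (cut off at length K):
δ^⊠(y ⊗ x_j) = Σ_{k} m_{k+1}(y, ρ₂₃,…,ρ₂₃) ⊗ x_{j+k}, written on ⊕_{j ∈ ℤ/n} M. -/
def boxDn {M : Type*} [AddCommMonoid M] (n K : ℕ) (m : M → List TB → M)
    (v : ZMod n → M) : ZMod n → M :=
  fun i => ∑ k ∈ Finset.range K, m (v (i - (k : ZMod n))) (List.replicate k TB.r23)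

/-- The box tensor differential of M ⊠ N for a general type D structure with
coefficients d (cut off at length K):
δ^⊠(x ⊗ y) = Σ_{k≥0} (m_{k+1} ⊗ id)(x ⊗ δ_k(y)). -/
def boxD {M V : Type*} [AddCommMonoid M] [Module (ZMod 2) M] [Fintype V] [DecidableEq V]
    (K : ℕ) (m : M → List TB → M) (d : V → TB → V → ZMod 2) (w : V → M) : V → M :=
  fun k' => ∑ k ∈ Finset.range K, ∑ j : V, ∑ as : Fin k → TB,
    itD d k j (List.ofFn as) k' • m (w j) (List.ofFn as)

/-- The A∞-morphism equations for t : M₁ → M₂ between type A structures (over ℤ/2). -/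
def ainfMor {M₁ M₂ : Type*} [AddCommMonoid M₁] [AddCommMonoid M₂]
    (m1 : M₁ → List TB → M₁) (m2 : M₂ → List TB → M₂) (t : M₁ → List TB → M₂) : Prop :=
  ∀ (x : M₁) (as : List TB),
    (∑ j ∈ Finset.range (as.length + 1), t (m1 x (as.take j)) (as.drop j)) +
      (∑ j ∈ Finset.range (as.length + 1), m2 (t x (as.take j)) (as.drop j)) +
      (∑ i ∈ Finset.range as.length, (splitPair as i).elim 0 (fun as' => t x as')) = 0

/-- The shifted morphism T between shifted structures. -/
def tbar {M₁ M₂ : Type*} (n : ℕ) (t : M₁ → List TB → M₂) (v : ZMod n → M₁)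
    (as : List TB) : ZMod n → M₂ :=
  fun i => t (v (i - (lL as : ZMod n))) as

/-- The bracket [j] ∈ {1,…,n}: [j] = n if n ∣ j, and [j] = j mod n otherwise. -/
def brk (n : ℕ) (j : ℤ) : ℤ := if (n : ℤ) ∣ j then (n : ℤ) else j % n

/-
The shift l is additive along a list of algebra inputs and is preserved by every nonzero
product of basis elements (l(ab) = l(a) + l(b) whenever ab ≠ 0). So every term of the
A∞ relation for m̄ with inputs x, a₁, …, a_{k−1}, read off in the summand i of M̄, involves only
the component of x in the summand i − l(a₁) − ⋯ − l(a_{k−1}), and the whole relation read off in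
the summand i is the A∞ relation for m at that component.
-/

lemma lB_of_bmul_eq_some : ∀ {a b c : TB}, bmul a b = some c → lB c = lB a + lB b := by
  decide

lemma lL_append (l₁ l₂ : List TB) : lL (l₁ ++ l₂) = lL l₁ + lL l₂ := by
  simp [lL]

lemma lL_of_splitPair_eq_some {as as' : List TB} {i : ℕ} (h : splitPair as i = some as') :
    lL as' = lL as := by
  unfold splitPair at h
  split at h
  · rename_i a b rest hdrop
    obtain ⟨c, hc, rfl⟩ := Option.map_eq_some_iff.mp h
    conv_rhs => rw [← List.take_append_drop i as, hdrop]
    simp [lL, lB_of_bmul_eq_some hc, add_assoc]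
  · exact absurd h nofun

section Shift

variable {M : Type*} {n : ℕ} (m : M → List TB → M) (x : ZMod n → M) (i : ZMod n)

lemma mbar_mbar_apply (l₁ l₂ : List TB) :
    mbar n m (mbar n m x l₁) l₂ i = m (m (x (i - lL (l₁ ++ l₂))) l₁) l₂ := by
  simp only [mbar, lL_append, Nat.cast_add, sub_sub, add_comm]

lemma splitPair_elim_mbar_apply [AddCommMonoid M] (as : List TB) (k : ℕ) :
    (splitPair as k).elim 0 (mbar n m x) i =
      (splitPair as k).elim 0 (fun as' => m (x (i - lL as)) as') := by
  rcases hs : splitPair as k with _ | as'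
  · rfl
  · simp only [Option.elim, mbar, lL_of_splitPair_eq_some hs]

end Shift

theorem stmt4_general {M : Type*} [AddCommMonoid M] (n₁ : ℕ)
    (m : M → List TB → M) (hm : ainfRel m) :
    ainfRel (mbar n₁ m) := by
  intro x as
  funext i
  simp only [Pi.add_apply, Finset.sum_apply, Pi.zero_apply, mbar_mbar_apply,
    List.take_append_drop, splitPair_elim_mbar_apply]
  exact hm (x (i - lL as)) as

/-- Lemma 4.1: the shifted operations m̄ on M̄ = ⊕_{j=1}^{n₁} M
satisfy the A∞-structural equations. -/
theorem stmt4 {M : Type*} [AddCommMonoid M] (n₁ : ℕ) (hn : 1 ≤ n₁)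
    (m : M → List TB → M) (hm : ainfRel m) :
    ainfRel (mbar n₁ m) :=
  stmt4_general n₁ m hm
end

section
/- Let M be a bounded type A structure over the torus algebra and N a type D structure (not necessarily bounded). Then the box tensor differential δ^⊠(x ⊗ y) = Σ_{k≥0}(m_{k+1} ⊗ id)(x ⊗ δ_k(y)) on M ⊗_ℐ N is well-defined (the sum is finite) and satisfies δ^⊠ ∘ δ^⊠ = 0, assuming the A∞ relations for M and the type D relation for N. -/
/-! Expanding δ^⊠ ∘ δ^⊠ and using that δ_q after δ_p is δ_{p+q}, the coefficient of `y_k` in the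
square, for a fixed word `l` of length `n`, is the sum over all splittings `l = l₁ ++ l₂` of
`m(m(x, l₁), l₂)`, weighted by the coefficient of `ρ_l ⊗ y_k` in `δ_n(y_j)`. By the A∞ relation
this equals the sum over all ways of multiplying two adjacent letters of `l`; grouping these by
the product letter, the weights of the two factors add up to the coefficient of `(μ ⊗ id) ∘
(id ⊗ δ₁) ∘ δ₁`, which vanishes by the type D relation. Boundedness of `M` only serves to make
all sums finite and to confine the splittings to lengths below the cutoff. -/

open Finset

section ListsOfLength

def listsOfLength (α : Type*) [Fintype α] (n : ℕ) : Finset (List α) :=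
  (univ : Finset (Fin n → α)).map ⟨List.ofFn, List.ofFn_injective⟩

variable {α : Type*} [Fintype α]

theorem mem_listsOfLength {n : ℕ} {l : List α} : l ∈ listsOfLength α n ↔ l.length = n := by
  simp only [listsOfLength, mem_map, mem_univ, true_and, Function.Embedding.coeFn_mk]
  refine ⟨fun ⟨f, hf⟩ => hf ▸ List.length_ofFn, fun h => ?_⟩
  subst h
  exact ⟨l.get, List.ofFn_get l⟩

theorem listsOfLength_zero : listsOfLength α 0 = {[]} := by
  ext l
  simp [mem_listsOfLength]

theorem sum_listsOfLength_succ {β : Type*} [AddCommMonoid β] (n : ℕ) (f : List α → β) :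
    ∑ l ∈ listsOfLength α (n + 1), f l = ∑ a : α, ∑ t ∈ listsOfLength α n, f (a :: t) := by
  simp only [listsOfLength, sum_map, Function.Embedding.coeFn_mk]
  rw [← (Fin.consEquiv fun _ => α).sum_comp, Fintype.sum_prod_type]
  simp [Fin.consEquiv]

theorem sum_listsOfLength_add {β : Type*} [AddCommMonoid β] (p q : ℕ) (f : List α → β) :
    ∑ l ∈ listsOfLength α (p + q), f l =
      ∑ l₁ ∈ listsOfLength α p, ∑ l₂ ∈ listsOfLength α q, f (l₁ ++ l₂) := by
  induction p generalizing f with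
  | zero => simp [listsOfLength_zero]
  | succ p ih => simp only [Nat.succ_add, sum_listsOfLength_succ, ih, List.cons_append]

end ListsOfLength

theorem sum_sum_sum_sum_comm {ι₁ ι₂ ι₃ ι₄ β : Type*} [AddCommMonoid β] (s₁ : Finset ι₁)
    (s₂ : Finset ι₂) (s₃ : Finset ι₃) (s₄ : Finset ι₄) (f : ι₁ → ι₂ → ι₃ → ι₄ → β) :
    ∑ a ∈ s₁, ∑ b ∈ s₂, ∑ c ∈ s₃, ∑ e ∈ s₄, f a b c e =
      ∑ c ∈ s₃, ∑ e ∈ s₄, ∑ a ∈ s₁, ∑ b ∈ s₂, f a b c e :=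
  (sum_congr rfl fun _ _ => sum_comm).trans <| sum_comm.trans <|
    sum_congr rfl fun _ _ => (sum_congr rfl fun _ _ => sum_comm).trans sum_comm

theorem sum_range_sum_range_eq_sum_antidiagonal {β : Type*} [AddCommMonoid β] {K : ℕ}
    (G : ℕ → ℕ → β) (h₁ : ∀ p q, K ≤ p → G p q = 0) (h₂ : ∀ p q, K ≤ q → G p q = 0) :
    ∑ p ∈ range K, ∑ q ∈ range K, G p q =
      ∑ n ∈ range (2 * K), ∑ pq ∈ antidiagonal n, G pq.1 pq.2 := by
  calc ∑ p ∈ range K, ∑ q ∈ range K, G p q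
      = ∑ p ∈ range K, ∑ q ∈ range (2 * K - p), G p q := by
        refine sum_congr rfl fun p hp => sum_subset (range_subset_range.2 ?_) fun q _ hq => ?_
        · have := mem_range.1 hp; omega
        · exact h₂ p q (by simpa using hq)
    _ = ∑ p ∈ range (2 * K), ∑ q ∈ range (2 * K - p), G p q :=
        sum_subset (range_subset_range.2 (by omega)) fun p _ hp =>
          sum_eq_zero fun q _ => h₁ p q (by simpa using hp)
    _ = ∑ n ∈ range (2 * K), ∑ pq ∈ antidiagonal n, G pq.1 pq.2 := by
        rw [← sum_range_diag_flip]
        simp only [Nat.sum_antidiagonal_eq_sum_range_succ G]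

theorem smul_option_elim {R N γ : Type*} [Semiring R] [AddCommMonoid N] [Module R N]
    [Fintype γ] [DecidableEq γ] (r : R) (o : Option γ) (g : γ → N) :
    r • o.elim 0 g = ∑ c, (if o = some c then r else 0) • g c := by
  cases o <;> simp [ite_smul]

theorem splitPair_eq_none {l : List TB} {i : ℕ} (h : l.length < i + 2) :
    splitPair l i = none := by
  have hdrop : (l.drop i).length < 2 := by rw [List.length_drop]; omega
  unfold splitPair
  split
  · next a b rest heq => rw [heq] at hdrop; simp at hdrop
  · rfl

theorem splitPair_append_cons_cons (l₁ l₂ : List TB) (a b : TB) :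
    splitPair (l₁ ++ a :: b :: l₂) l₁.length = (bmul a b).map (fun c => l₁ ++ c :: l₂) := by
  simp [splitPair]

section BoxTensor

variable {M V : Type*} [Fintype V] [DecidableEq V]

def deltaCoeff (d : V → TB → V → ZMod 2) (j : V) (l : List TB) (k : V) : ZMod 2 :=
  itD d l.length j l k

variable {d : V → TB → V → ZMod 2}

theorem deltaCoeff_nil (j k : V) : deltaCoeff d j [] k = if j = k then 1 else 0 := by
  simp [deltaCoeff, itD]

theorem deltaCoeff_cons (j k : V) (a : TB) (l : List TB) :
    deltaCoeff d j (a :: l) k = ∑ i, d j a i * deltaCoeff d i l k := rfl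

theorem deltaCoeff_append (j k : V) (l₁ l₂ : List TB) :
    deltaCoeff d j (l₁ ++ l₂) k = ∑ i, deltaCoeff d j l₁ i * deltaCoeff d i l₂ k := by
  induction l₁ generalizing j with
  | nil => simp [deltaCoeff_nil]
  | cons a l ih =>
    simp only [List.cons_append, deltaCoeff_cons, ih, mul_sum, sum_mul, mul_assoc]
    exact sum_comm

theorem dRel.sum_deltaCoeff_pair (hd : dRel d) (j k : V) (c : TB) :
    ∑ a, ∑ b, (if bmul a b = some c then deltaCoeff d j [a, b] k else 0) = 0 := by
  refine Eq.trans ?_ ((sum_comm.trans (sum_congr rfl fun _ _ => sum_comm)).symm.trans (hd j k c))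
  simp only [deltaCoeff_cons, deltaCoeff_nil, mul_ite, mul_one, mul_zero, sum_ite_eq', mem_univ,
    if_true, ite_sum_zero]

theorem dRel.sum_deltaCoeff_merge (hd : dRel d) (j k : V) (c : TB) (l₁ l₂ : List TB) :
    ∑ a, ∑ b, (if bmul a b = some c then deltaCoeff d j (l₁ ++ a :: b :: l₂) k else 0) = 0 := by
  have hsplit : ∀ a b, deltaCoeff d j (l₁ ++ a :: b :: l₂) k =
      ∑ i, ∑ i', deltaCoeff d j l₁ i * deltaCoeff d i [a, b] i' * deltaCoeff d i' l₂ k := by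
    intro a b
    rw [show l₁ ++ a :: b :: l₂ = l₁ ++ ([a, b] ++ l₂) from rfl, deltaCoeff_append]
    simp only [deltaCoeff_append, mul_sum, mul_assoc]
  calc ∑ a, ∑ b, (if bmul a b = some c then deltaCoeff d j (l₁ ++ a :: b :: l₂) k else 0)
      = ∑ i, ∑ i', deltaCoeff d j l₁ i *
          (∑ a, ∑ b, if bmul a b = some c then deltaCoeff d i [a, b] i' else 0) *
            deltaCoeff d i' l₂ k := by
        simp only [hsplit, mul_sum, sum_mul, mul_ite, ite_mul, mul_zero, zero_mul, ite_sum_zero]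
        exact sum_sum_sum_sum_comm _ _ _ _ _
    _ = 0 := by simp [hd.sum_deltaCoeff_pair]

section AddCommMonoid

variable [AddCommMonoid M] [Module (ZMod 2) M]

theorem dRel.sum_smul_splitPair_eq_zero (hd : dRel d) (g : List TB → M) (j k : V) (n i : ℕ) :
    ∑ l ∈ listsOfLength TB n, deltaCoeff d j l k • (splitPair l i).elim 0 g = 0 := by
  by_cases h : i + 2 ≤ n
  · obtain ⟨r, rfl⟩ : ∃ r, n = i + (r + 1 + 1) := ⟨n - i - 2, by omega⟩
    rw [sum_listsOfLength_add]
    refine sum_eq_zero fun l₁ hl₁ => ?_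
    obtain rfl := mem_listsOfLength.1 hl₁
    simp only [sum_listsOfLength_succ, splitPair_append_cons_cons, Option.elim_map,
      smul_option_elim]
    rw [sum_sum_sum_sum_comm]
    refine sum_eq_zero fun l₂ _ => sum_eq_zero fun c _ => ?_
    simp only [← sum_smul, hd.sum_deltaCoeff_merge, zero_smul]
  · exact sum_eq_zero fun l hl => by
      rw [splitPair_eq_none (by rw [mem_listsOfLength.1 hl]; omega), Option.elim_none, smul_zero]

def boxSquareTerm (m : M → List TB → M) (d : V → TB → V → ZMod 2) (x : M) (j k : V)
    (p q : ℕ) : M :=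
  ∑ l₁ ∈ listsOfLength TB p, ∑ l₂ ∈ listsOfLength TB q,
    deltaCoeff d j (l₁ ++ l₂) k • m (m x l₁) l₂

variable {m : M → List TB → M}

theorem boxD_apply_eq_sum (K : ℕ) (w : V → M) (k : V) :
    boxD K m d w k =
      ∑ j, ∑ p ∈ range K, ∑ l ∈ listsOfLength TB p, deltaCoeff d j l k • m (w j) l := by
  simp only [boxD, listsOfLength, sum_map, Function.Embedding.coeFn_mk, deltaCoeff,
    List.length_ofFn]
  exact sum_comm

section Bounded

variable {K : ℕ} (hb : ∀ (x : M) (as : List TB), K ≤ as.length → m x as = 0)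
include hb

theorem boxSquareTerm_eq_zero_of_le_left (h0 : ∀ as : List TB, m 0 as = 0) (x : M) (j k : V)
    (p q : ℕ) (hp : K ≤ p) : boxSquareTerm m d x j k p q = 0 :=
  sum_eq_zero fun l₁ hl₁ => sum_eq_zero fun l₂ _ => by
    rw [hb x l₁ ((mem_listsOfLength.1 hl₁).symm ▸ hp), h0, smul_zero]

theorem boxSquareTerm_eq_zero_of_le_right (x : M) (j k : V) (p q : ℕ) (hq : K ≤ q) :
    boxSquareTerm m d x j k p q = 0 :=
  sum_eq_zero fun _ _ => sum_eq_zero fun l₂ hl₂ => by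
    rw [hb _ l₂ ((mem_listsOfLength.1 hl₂).symm ▸ hq), smul_zero]

theorem boxD_eq_of_le {K' : ℕ} (hK : K ≤ K') : boxD K' m d = boxD K m d := by
  funext w k
  simp only [boxD_apply_eq_sum]
  refine sum_congr rfl fun j _ => (sum_subset (range_subset_range.2 hK) fun p _ hp => ?_).symm
  exact sum_eq_zero fun l hl => by
    rw [hb _ l ((mem_listsOfLength.1 hl).symm ▸ not_lt.1 (mem_range.not.1 hp)), smul_zero]

end Bounded

end AddCommMonoid

section AddCommGroup

variable [AddCommGroup M] [Module (ZMod 2) M] {m : M → List TB → M}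

theorem sum_antidiagonal_boxSquareTerm (hm : ainfRel m) (hd : dRel d) (x : M) (j k : V)
    (n : ℕ) : ∑ pq ∈ antidiagonal n, boxSquareTerm m d x j k pq.1 pq.2 = 0 := by
  have hA : ∀ l : List TB, ∑ i ∈ range (l.length + 1), m (m x (l.take i)) (l.drop i) =
      -∑ i ∈ range l.length, (splitPair l i).elim 0 (m x) :=
    fun l => eq_neg_of_add_eq_zero_left (hm x l)
  calc ∑ pq ∈ antidiagonal n, boxSquareTerm m d x j k pq.1 pq.2
      = ∑ pq ∈ antidiagonal n, ∑ l ∈ listsOfLength TB n,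
          deltaCoeff d j l k • m (m x (l.take pq.1)) (l.drop pq.1) := by
        refine sum_congr rfl fun pq hpq => ?_
        rw [← mem_antidiagonal.1 hpq, sum_listsOfLength_add, boxSquareTerm]
        refine sum_congr rfl fun l₁ hl₁ => sum_congr rfl fun l₂ _ => ?_
        rw [List.take_left' (mem_listsOfLength.1 hl₁), List.drop_left' (mem_listsOfLength.1 hl₁)]
    _ = ∑ l ∈ listsOfLength TB n,
          deltaCoeff d j l k • ∑ i ∈ range (n + 1), m (m x (l.take i)) (l.drop i) := by
        rw [sum_comm]
        simp only [smul_sum, Nat.sum_antidiagonal_eq_sum_range_succ_mk]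
    _ = -∑ i ∈ range n, ∑ l ∈ listsOfLength TB n,
          deltaCoeff d j l k • (splitPair l i).elim 0 (m x) := by
        rw [sum_comm, ← sum_neg_distrib]
        refine sum_congr rfl fun l hl => ?_
        rw [← mem_listsOfLength.1 hl, hA, smul_neg, smul_sum]
    _ = 0 := by simp [hd.sum_smul_splitPair_eq_zero]

theorem boxD_boxD_apply (hadd : ∀ (x y : M) (as : List TB), m (x + y) as = m x as + m y as)
    (K : ℕ) (w : V → M) (k : V) :
    boxD K m d (boxD K m d w) k =
      ∑ j, ∑ p ∈ range K, ∑ q ∈ range K, boxSquareTerm m d (w j) j k p q := by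
  let φ : List TB → M →ₗ[ZMod 2] M := fun l =>
    (AddMonoidHom.mk' (m · l) (hadd · · l)).toZModLinearMap 2
  set S := (range K).sigma (listsOfLength TB)
  have hS : ∀ (v : V → M) (k : V), boxD K m d v k =
      ∑ j, ∑ s ∈ S, deltaCoeff d j s.2 k • m (v j) s.2 := fun v k => by
    simp only [boxD_apply_eq_sum, S, sum_sigma]
  have hlin : ∀ (f : V → (Σ _ : ℕ, List TB) → ZMod 2) (x : V → (Σ _ : ℕ, List TB) → M)
      (l : List TB), m (∑ j, ∑ s ∈ S, f j s • x j s) l = ∑ j, ∑ s ∈ S, f j s • m (x j s) l :=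
    fun f x l => by
      change φ l _ = _
      simp only [map_sum, map_smul]
      rfl
  calc boxD K m d (boxD K m d w) k
      = ∑ j₂, ∑ s₂ ∈ S, ∑ j₁, ∑ s₁ ∈ S, (deltaCoeff d j₂ s₂.2 k * deltaCoeff d j₁ s₁.2 j₂) •
          m (m (w j₁) s₁.2) s₂.2 := by
        simp only [hS, hlin, smul_sum, smul_smul]
    _ = ∑ j₁, ∑ s₁ ∈ S, ∑ s₂ ∈ S,
          deltaCoeff d j₁ (s₁.2 ++ s₂.2) k • m (m (w j₁) s₁.2) s₂.2 := by
        rw [sum_sum_sum_sum_comm]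
        refine sum_congr rfl fun j₁ _ => sum_congr rfl fun s₁ _ => ?_
        rw [sum_comm]
        simp only [deltaCoeff_append, sum_smul, mul_comm]
    _ = ∑ j, ∑ p ∈ range K, ∑ q ∈ range K, boxSquareTerm m d (w j) j k p q := by
        simp only [boxSquareTerm, S, sum_sigma]
        exact sum_congr rfl fun j _ => sum_congr rfl fun p _ => sum_comm

end AddCommGroup

end BoxTensor

theorem stmt17_general {M V : Type*} [AddCommGroup M] [Module (ZMod 2) M]
    [Fintype V] [DecidableEq V]
    (K : ℕ) (m : M → List TB → M) (d : V → TB → V → ZMod 2)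
    (hb : ∀ (x : M) (as : List TB), K ≤ as.length → m x as = 0)
    (hadd : ∀ (x y : M) (as : List TB), m (x + y) as = m x as + m y as)
    (hm : ainfRel m) (hd : dRel d) :
    (∀ K' : ℕ, K ≤ K' → boxD K' m d = boxD K m d) ∧
    (∀ w : V → M, boxD K m d (boxD K m d w) = 0) := by
  have h0 : ∀ as : List TB, m 0 as = 0 := fun as => by simpa using hadd 0 0 as
  refine ⟨fun K' hK => boxD_eq_of_le hb hK, fun w => funext fun k => ?_⟩
  rw [boxD_boxD_apply hadd, Pi.zero_apply]
  refine sum_eq_zero fun j _ => ?_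
  rw [sum_range_sum_range_eq_sum_antidiagonal _ (boxSquareTerm_eq_zero_of_le_left hb h0 _ _ _)
    (boxSquareTerm_eq_zero_of_le_right hb _ _ _)]
  exact sum_eq_zero fun n _ => sum_antidiagonal_boxSquareTerm hm hd _ _ _ n

/-- pairing differential: for M a bounded type A structure and N any
type D structure, the box differential is well-defined (independent of the cutoff
beyond the bound) and squares to zero. -/
theorem stmt17 {M V : Type*} [AddCommGroup M] [Module (ZMod 2) M]
    [Fintype V] [DecidableEq V]
    (K : ℕ) (m : M → List TB → M) (d : V → TB → V → ZMod 2)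
    (hb : ∀ (x : M) (as : List TB), K ≤ as.length → m x as = 0)
    (hadd : ∀ (x y : M) (as : List TB), m (x + y) as = m x as + m y as)
    (h0 : ∀ as : List TB, m (0 : M) as = 0)
    (hm : ainfRel m) (hd : dRel d) :
    (∀ K' : ℕ, K ≤ K' → boxD K' m d = boxD K m d) ∧
    (∀ w : V → M, boxD K m d (boxD K m d w) = 0) :=
  stmt17_general K m d hb hadd hm hd
end
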